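/- Let p_1, …, p_m, f ∈ P_d (m ≥ 1) all have strictly positive entries, and suppose v ∈ P_d is the least upper bound (join) of {p_1, …, p_m, f} in (P_d, ≺), i.e., p_j ≺ v for all j, f ≺ v, and for every w ∈ P_d with p_j ≺ w for all j and f ≺ w one has v ≺ w. Then min over l ∈ {1, …, d} of E_l(v)/E_l(f) equals min over j ∈ {1, …, m} of (min over l ∈ {1, …, d} of E_l(p_j)/E_l(f)). (The optimal probability of converting the optimal common product state of {p_1, …, p_m, f} into f equals the minimum over j of the optimal probability of converting p_j into f.) -/
import Mathlib


open Finset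

noncomputable section

/-- Prefix sum of the first `k` entries of `x` (1-based: `x_1 + ⋯ + x_k`). -/
def pfx (d : ℕ) (x : Fin d → ℝ) (k : ℕ) : ℝ :=
  ∑ i : Fin d, if (i : ℕ) < k then x i else 0

/-- Tail sum `E_l(x) = ∑_{i=l}^d x_i` for 1-based `l ∈ {1,…,d}`; `E_{d+1}(x) = 0`. -/
def Etail (d : ℕ) (x : Fin d → ℝ) (l : ℕ) : ℝ :=
  ∑ i : Fin d, if l ≤ (i : ℕ) + 1 then x i else 0

/-- Membership in `P_d`: decreasingly ordered, nonnegative, summing to 1. -/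
def memP (d : ℕ) (x : Fin d → ℝ) : Prop :=
  (∀ i j : Fin d, i ≤ j → x j ≤ x i) ∧ (∀ i, 0 ≤ x i) ∧ (∑ i, x i) = 1

/-- Majorization `x ≺ y`: all partial sums of `x` bounded by those of `y`, equal total sum. -/
def Maj (d : ℕ) (x y : Fin d → ℝ) : Prop :=
  (∀ k : ℕ, k < d → pfx d x k ≤ pfx d y k) ∧ pfx d x d = pfx d y d

/-- The meet `p ∧ q` of the majorization lattice, defined componentwise. -/
def meet (d : ℕ) (p q : Fin d → ℝ) : Fin d → ℝ :=
  fun i => min (pfx d p ((i : ℕ) + 1)) (pfx d q ((i : ℕ) + 1))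
         - min (pfx d p (i : ℕ)) (pfx d q (i : ℕ))

lemma pfx_zero' (d : ℕ) (x : Fin d → ℝ) : pfx d x 0 = 0 := by simp [pfx]

lemma pfx_top' (d : ℕ) (x : Fin d → ℝ) : pfx d x d = ∑ i, x i := by
  simp [pfx, Fin.is_lt]

lemma Etail_succ' (d : ℕ) (x : Fin d → ℝ) (k : ℕ) :
    Etail d x (k+1) = (∑ i, x i) - pfx d x k := by
  unfold Etail pfx
  rw [← Finset.sum_sub_distrib]
  apply Finset.sum_congr rfl
  intro i _
  by_cases h : (i : ℕ) < k
  · have h' : ¬ (k+1 ≤ (i:ℕ)+1) := by omega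
    simp [h, h']
  · have h' : k+1 ≤ (i:ℕ)+1 := by omega
    simp [h, h']

lemma Etail_one' (d : ℕ) (x : Fin d → ℝ) : Etail d x 1 = ∑ i, x i := by
  unfold Etail
  apply Finset.sum_congr rfl
  intro i _
  have h : 1 ≤ (i:ℕ)+1 := by omega
  simp [h]

lemma Etail_nonneg' (d : ℕ) (x : Fin d → ℝ) (hx : ∀ i, 0 ≤ x i) (l : ℕ) :
    0 ≤ Etail d x l := by
  apply Finset.sum_nonneg
  intro i _
  split <;> simp [hx i]

lemma Etail_pos' (d : ℕ) (hd : 1 ≤ d) (f : Fin d → ℝ) (hf : ∀ i, 0 < f i)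
    (l : ℕ) (hl : l ≤ d) : 0 < Etail d f l := by
  apply Finset.sum_pos'
  · intro i _
    split <;> simp [(hf i).le]
  · refine ⟨⟨d-1, by omega⟩, Finset.mem_univ _, ?_⟩
    have h : l ≤ (d-1)+1 := by omega
    simpa [h] using hf ⟨d-1, by omega⟩

/-- greedy protocol with several initial states: if `v` is the least upper
bound (join) of `{p_1, …, p_m, f}` in `(P_d, ≺)`, then the optimal conversion probability
from `v` to `f` equals the minimum over `j` of the optimal conversion probability from
`p_j` to `f`. -/
theorem greedy_optimal_family (d : ℕ) (hd : 1 ≤ d) (m : ℕ) (hm : 1 ≤ m)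
    (p : Fin m → Fin d → ℝ) (f v : Fin d → ℝ)
    (hp : ∀ j, memP d (p j)) (hf : memP d f) (hv : memP d v)
    (hppos : ∀ j i, 0 < p j i) (hfpos : ∀ i, 0 < f i)
    (hpv : ∀ j, Maj d (p j) v) (hfv : Maj d f v)
    (hlub : ∀ w : Fin d → ℝ, memP d w → (∀ j, Maj d (p j) w) → Maj d f w → Maj d v w) :
    ((Finset.Icc 1 d).inf' (Finset.nonempty_Icc.mpr hd)
        fun l => Etail d v l / Etail d f l)
      = Finset.univ.inf' (Finset.univ_nonempty_iff.mpr ⟨⟨0, hm⟩⟩)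
          (fun j : Fin m =>
            (Finset.Icc 1 d).inf' (Finset.nonempty_Icc.mpr hd)
              fun l => Etail d (p j) l / Etail d f l) := by
  obtain ⟨hfsort, hfnn, hfsum⟩ := hf
  obtain ⟨hvsort, hvnn, hvsum⟩ := hv
  set μ := Finset.univ.inf' (Finset.univ_nonempty_iff.mpr ⟨⟨0, hm⟩⟩)
      (fun j : Fin m =>
        (Finset.Icc 1 d).inf' (Finset.nonempty_Icc.mpr hd)
          fun l => Etail d (p j) l / Etail d f l) with hμdef
  have hEf : ∀ l, 1 ≤ l → l ≤ d → 0 < Etail d f l :=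
    fun l _ hl => Etail_pos' d hd f hfpos l hl
  have hμle : ∀ j l, 1 ≤ l → l ≤ d → μ ≤ Etail d (p j) l / Etail d f l := by
    intro j l h1 h2
    calc μ ≤ (Finset.Icc 1 d).inf' (Finset.nonempty_Icc.mpr hd)
              (fun l => Etail d (p j) l / Etail d f l) :=
            Finset.inf'_le _ (Finset.mem_univ j)
      _ ≤ Etail d (p j) l / Etail d f l :=
            Finset.inf'_le _ (by rw [Finset.mem_Icc]; omega)
  have hμ0 : 0 ≤ μ := by
    apply Finset.le_inf'
    intro j _
    apply Finset.le_inf'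
    intro l hl
    rw [Finset.mem_Icc] at hl
    exact div_nonneg (Etail_nonneg' d (p j) (hp j).2.1 l) (hEf l hl.1 hl.2).le
  have hμ1 : μ ≤ 1 := by
    have h := hμle ⟨0, hm⟩ 1 le_rfl hd
    rwa [Etail_one', Etail_one', (hp ⟨0, hm⟩).2.2, hfsum, div_one] at h
  have hμtail : ∀ j k, k < d → μ * Etail d f (k+1) ≤ Etail d (p j) (k+1) := by
    intro j k hk
    have h := hμle j (k+1) (by omega) (by omega)
    exact (le_div_iff₀ (hEf (k+1) (by omega) (by omega))).mp h
  set w : Fin d → ℝ := fun i => (if (i:ℕ) = 0 then 1 - μ else 0) + μ * f i with hwdef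
  have hpw : ∀ k, pfx d w k = (if 1 ≤ k then 1 - μ else 0) + μ * pfx d f k := by
    intro k
    unfold pfx
    have key : ∀ i : Fin d, (if (i:ℕ) < k then w i else 0)
        = (if (i:ℕ) = 0 ∧ (i:ℕ) < k then 1 - μ else 0)
          + μ * (if (i:ℕ) < k then f i else 0) := by
      intro i
      by_cases h : (i:ℕ) < k
      · by_cases h0 : (i:ℕ) = 0
        · have hk0 : 0 < k := by omega
          simp [hwdef, h, h0, hk0]
        · simp [hwdef, h, h0]
      · simp [h]
    rw [Finset.sum_congr rfl (fun i _ => key i), Finset.sum_add_distrib, ← Finset.mul_sum]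
    congr 1
    rw [Finset.sum_eq_single (⟨0, hd⟩ : Fin d)]
    · simp only [Fin.val_mk, true_and]
      split_ifs with h1 h2 h2 <;> first | rfl | omega
    · intro b _ hb
      have hb0 : (b:ℕ) ≠ 0 := fun h => hb (Fin.ext h)
      simp [hb0]
    · intro h
      exact absurd (Finset.mem_univ _) h
  have hwsum : ∑ i, w i = 1 := by
    have := hpw d
    rw [pfx_top', pfx_top', hfsum] at this
    simp only [hd, if_pos] at this
    linarith
  have hwmem : memP d w := by
    refine ⟨?_, ?_, hwsum⟩
    · intro i j hij
      have hij' : (i:ℕ) ≤ (j:ℕ) := hij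
      have hmul : μ * f j ≤ μ * f i := mul_le_mul_of_nonneg_left (hfsort i j hij) hμ0
      by_cases hi : (i:ℕ) = 0
      · by_cases hj : (j:ℕ) = 0
        · have : i = j := Fin.ext (by omega)
          subst this
          exact le_rfl
        · simp only [hwdef, hi, hj, if_pos, if_neg, ite_true, ite_false]
          simp only [zero_add]
          linarith
      · have hj : (j:ℕ) ≠ 0 := by omega
        simp only [hwdef, hi, hj, ite_false]
        linarith
    · intro i
      have : 0 ≤ μ * f i := mul_nonneg hμ0 (hfpos i).le
      by_cases hi : (i:ℕ) = 0 <;> simp [hwdef, hi] <;> linarith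
  have hfw : Maj d f w := by
    constructor
    · intro k hk
      rw [hpw k]
      rcases Nat.eq_zero_or_pos k with h0 | h1
      · subst h0
        simp [pfx_zero']
      · have hk1 : pfx d f k ≤ 1 := by
          have hnn := Etail_nonneg' d f (fun i => (hfpos i).le) (k+1)
          rw [Etail_succ', hfsum] at hnn
          linarith
        have h1' : 1 ≤ k := h1
        rw [if_pos h1']
        nlinarith
    · rw [pfx_top', pfx_top', hfsum, hwsum]
  have hpjw : ∀ j, Maj d (p j) w := by
    intro j
    constructor
    · intro k hk
      rcases Nat.eq_zero_or_pos k with h0 | h1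
      · subst h0
        simp [pfx_zero']
      · rw [hpw k]
        have h1' : 1 ≤ k := h1
        rw [if_pos h1']
        have ht := hμtail j k hk
        rw [Etail_succ', Etail_succ', hfsum, (hp j).2.2] at ht
        nlinarith
    · rw [pfx_top', pfx_top', (hp j).2.2, hwsum]
  have hvw := hlub w hwmem hpjw hfw
  have hlow : ∀ l, 1 ≤ l → l ≤ d → μ * Etail d f l ≤ Etail d v l := by
    intro l h1 h2
    obtain ⟨k, rfl⟩ : ∃ k, l = k + 1 := ⟨l - 1, by omega⟩
    have hk : k < d := by omega
    have h := hvw.1 k hk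
    rw [hpw k] at h
    rw [Etail_succ', Etail_succ', hfsum, hvsum]
    rcases Nat.eq_zero_or_pos k with h0 | hk1
    · subst h0
      rw [pfx_zero']
      have hvnn0 : pfx d v 0 = 0 := pfx_zero' d v
      rw [hvnn0]
      nlinarith
    · have hk1' : 1 ≤ k := hk1
      rw [if_pos hk1'] at h
      nlinarith
  apply le_antisymm
  · apply Finset.le_inf'
    intro j _
    apply Finset.le_inf'
    intro l hl
    rw [Finset.mem_Icc] at hl
    have hmem : l ∈ Finset.Icc 1 d := by rw [Finset.mem_Icc]; omega
    calc ((Finset.Icc 1 d).inf' (Finset.nonempty_Icc.mpr hd)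
            fun l => Etail d v l / Etail d f l)
        ≤ Etail d v l / Etail d f l := Finset.inf'_le _ hmem
      _ ≤ Etail d (p j) l / Etail d f l := by
          have hle : Etail d v l ≤ Etail d (p j) l := by
            obtain ⟨k, rfl⟩ : ∃ k, l = k + 1 := ⟨l - 1, by omega⟩
            have h := (hpv j).1 k (by omega)
            rw [Etail_succ', Etail_succ', hvsum, (hp j).2.2]
            linarith
          exact (div_le_div_iff_of_pos_right (hEf l hl.1 hl.2)).mpr hle
  · apply Finset.le_inf'
    intro l hl
    rw [Finset.mem_Icc] at hl
    rw [le_div_iff₀ (hEf l hl.1 hl.2)]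
    exact hlow l hl.1 hl.2

end
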